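/- arXiv:2510.16403 — 7 statements merged into one kernel-verified Lean document; each statement's English description precedes it below -/
import Mathlib

section
/- Let X be a real normed space, Ω ⊆ X, α₁, α₂ ∈ [0,1], and T₁, T₂ : Ω → Ω with ‖T_i(ξ) - T_i(η)‖ ≤ α_i‖ξ - η‖ for all ξ, η ∈ Ω, and T₁(x*) = T₂(x*) = x* for some x* ∈ Ω. Let (a_n), (b_n) ⊂ [0,1], and define y_n = (1-a_n)x_n + a_n T₁(x_n), x_{n+1} = (1-b_n)T₁(y_n) + b_n T₂(y_n) (assuming y_n, x_{n+1} ∈ Ω). Then for all n, ‖x_{n+1} - x*‖ ≤ [1 - (1-α₁)a_n][α₁ + (α₂-α₁)b_n]‖x_n - x*‖. -/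
/-!
Both half-steps of the iteration are convex combinations, and the norm is convex, so the
distance to the common fixed point `x*` contracts by the corresponding convex combination of
the factors: `‖y_n - x*‖ ≤ ((1 - a_n) + a_n α₁) ‖x_n - x*‖` and
`‖x_{n+1} - x*‖ ≤ ((1 - b_n) α₁ + b_n α₂) ‖y_n - x*‖`. Multiplying the two estimates gives the claim.
-/

section ConvexCombination

variable {X : Type*} [NormedAddCommGroup X] [NormedSpace ℝ X]

theorem norm_convexCombination_sub_le {t : ℝ} (ht : t ∈ Set.Icc (0 : ℝ) 1) (u v p : X) :
    ‖(1 - t) • u + t • v - p‖ ≤ (1 - t) * ‖u - p‖ + t * ‖v - p‖ := by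
  have hdecomp : (1 - t) • u + t • v - p = (1 - t) • (u - p) + t • (v - p) := by
    simp only [smul_sub, sub_smul, one_smul]
    abel
  rw [hdecomp]
  exact (convexOn_norm convex_univ).2 (Set.mem_univ _) (Set.mem_univ _)
    (sub_nonneg.2 ht.2) ht.1 (sub_add_cancel 1 t)

theorem norm_mannStep_sub_le {t α : ℝ} (ht : t ∈ Set.Icc (0 : ℝ) 1) {T : X → X} {u p : X}
    (hT : ‖T u - p‖ ≤ α * ‖u - p‖) :
    ‖(1 - t) • u + t • T u - p‖ ≤ (1 - (1 - α) * t) * ‖u - p‖ :=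
  calc ‖(1 - t) • u + t • T u - p‖ ≤ (1 - t) * ‖u - p‖ + t * ‖T u - p‖ :=
        norm_convexCombination_sub_le ht u (T u) p
    _ ≤ (1 - t) * ‖u - p‖ + t * (α * ‖u - p‖) := by gcongr; exact ht.1
    _ = (1 - (1 - α) * t) * ‖u - p‖ := by ring

theorem norm_averagedStep_sub_le {t α₁ α₂ : ℝ} (ht : t ∈ Set.Icc (0 : ℝ) 1) {T₁ T₂ : X → X}
    {u p : X} (hT₁ : ‖T₁ u - p‖ ≤ α₁ * ‖u - p‖) (hT₂ : ‖T₂ u - p‖ ≤ α₂ * ‖u - p‖) :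
    ‖(1 - t) • T₁ u + t • T₂ u - p‖ ≤ (α₁ + (α₂ - α₁) * t) * ‖u - p‖ :=
  calc ‖(1 - t) • T₁ u + t • T₂ u - p‖ ≤ (1 - t) * ‖T₁ u - p‖ + t * ‖T₂ u - p‖ :=
        norm_convexCombination_sub_le ht (T₁ u) (T₂ u) p
    _ ≤ (1 - t) * (α₁ * ‖u - p‖) + t * (α₂ * ‖u - p‖) := by
        gcongr
        exacts [sub_nonneg.2 ht.2, ht.1]
    _ = (α₁ + (α₂ - α₁) * t) * ‖u - p‖ := by ring

end ConvexCombination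

theorem IG_one_step_general {X : Type*} [NormedAddCommGroup X] [NormedSpace ℝ X]
    (Ω : Set X) (α₁ α₂ : ℝ)
    (hα₁ : α₁ ∈ Set.Icc (0 : ℝ) 1) (hα₂ : α₂ ∈ Set.Icc (0 : ℝ) 1)
    (T₁ T₂ : X → X)
    (hT₁ : ∀ ξ ∈ Ω, ∀ η ∈ Ω, ‖T₁ ξ - T₁ η‖ ≤ α₁ * ‖ξ - η‖)
    (hT₂ : ∀ ξ ∈ Ω, ∀ η ∈ Ω, ‖T₂ ξ - T₂ η‖ ≤ α₂ * ‖ξ - η‖)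
    (xs : X) (hxs : xs ∈ Ω) (hfix₁ : T₁ xs = xs) (hfix₂ : T₂ xs = xs)
    (a b : ℕ → ℝ)
    (ha : ∀ n, a n ∈ Set.Icc (0 : ℝ) 1) (hb : ∀ n, b n ∈ Set.Icc (0 : ℝ) 1)
    (x y : ℕ → X) (hxΩ : ∀ n, x n ∈ Ω) (hyΩ : ∀ n, y n ∈ Ω)
    (hy : ∀ n, y n = (1 - a n) • x n + a n • T₁ (x n))
    (hx : ∀ n, x (n + 1) = (1 - b n) • T₁ (y n) + b n • T₂ (y n)) :
    ∀ n, ‖x (n + 1) - xs‖ ≤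
      (1 - (1 - α₁) * a n) * (α₁ + (α₂ - α₁) * b n) * ‖x n - xs‖ := by
  intro n
  have hT₁xs : ∀ ξ ∈ Ω, ‖T₁ ξ - xs‖ ≤ α₁ * ‖ξ - xs‖ := fun ξ hξ ↦ by
    simpa only [hfix₁] using hT₁ ξ hξ xs hxs
  have hT₂xs : ∀ ξ ∈ Ω, ‖T₂ ξ - xs‖ ≤ α₂ * ‖ξ - xs‖ := fun ξ hξ ↦ by
    simpa only [hfix₂] using hT₂ ξ hξ xs hxs
  have hy_le : ‖y n - xs‖ ≤ (1 - (1 - α₁) * a n) * ‖x n - xs‖ :=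
    hy n ▸ norm_mannStep_sub_le (ha n) (hT₁xs _ (hxΩ n))
  have hx_le : ‖x (n + 1) - xs‖ ≤ (α₁ + (α₂ - α₁) * b n) * ‖y n - xs‖ :=
    hx n ▸ norm_averagedStep_sub_le (hb n) (hT₁xs _ (hyΩ n)) (hT₂xs _ (hyΩ n))
  have hfactor_nonneg : 0 ≤ α₁ + (α₂ - α₁) * b n := by
    nlinarith [hα₁.1, hα₂.1, (hb n).1, (hb n).2]
  calc ‖x (n + 1) - xs‖ ≤ (α₁ + (α₂ - α₁) * b n) * ‖y n - xs‖ := hx_le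
    _ ≤ (α₁ + (α₂ - α₁) * b n) * ((1 - (1 - α₁) * a n) * ‖x n - xs‖) := by gcongr
    _ = (1 - (1 - α₁) * a n) * (α₁ + (α₂ - α₁) * b n) * ‖x n - xs‖ := by ring

theorem IG_one_step {X : Type*} [NormedAddCommGroup X] [NormedSpace ℝ X]
    (Ω : Set X) (α₁ α₂ : ℝ)
    (hα₁ : α₁ ∈ Set.Icc (0 : ℝ) 1) (hα₂ : α₂ ∈ Set.Icc (0 : ℝ) 1)
    (T₁ T₂ : X → X)
    (hT₁map : ∀ ξ ∈ Ω, T₁ ξ ∈ Ω) (hT₂map : ∀ ξ ∈ Ω, T₂ ξ ∈ Ω)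
    (hT₁ : ∀ ξ ∈ Ω, ∀ η ∈ Ω, ‖T₁ ξ - T₁ η‖ ≤ α₁ * ‖ξ - η‖)
    (hT₂ : ∀ ξ ∈ Ω, ∀ η ∈ Ω, ‖T₂ ξ - T₂ η‖ ≤ α₂ * ‖ξ - η‖)
    (xs : X) (hxs : xs ∈ Ω) (hfix₁ : T₁ xs = xs) (hfix₂ : T₂ xs = xs)
    (a b : ℕ → ℝ)
    (ha : ∀ n, a n ∈ Set.Icc (0 : ℝ) 1) (hb : ∀ n, b n ∈ Set.Icc (0 : ℝ) 1)
    (x y : ℕ → X) (hxΩ : ∀ n, x n ∈ Ω) (hyΩ : ∀ n, y n ∈ Ω)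
    (hy : ∀ n, y n = (1 - a n) • x n + a n • T₁ (x n))
    (hx : ∀ n, x (n + 1) = (1 - b n) • T₁ (y n) + b n • T₂ (y n)) :
    ∀ n, ‖x (n + 1) - xs‖ ≤
      (1 - (1 - α₁) * a n) * (α₁ + (α₂ - α₁) * b n) * ‖x n - xs‖ :=
  IG_one_step_general Ω α₁ α₂ hα₁ hα₂ T₁ T₂ hT₁ hT₂ xs hxs hfix₁ hfix₂ a b ha hb x y hxΩ hyΩ hy hx
end

section
/- With Ω = (0, 1/2) ⊂ ℝ, T₁(x) = α₁x, T₂(x) = α₂x, and x* = 0, the (IG) iteration satisfies ‖x_{n+1} - x*‖ = (∏_{k=0}^{n} [1 - (1-α₁)a_k][α₁ + (α₂-α₁)b_k]) ‖x₀ - x*‖ for all n ∈ ℕ, showing the upper bound U_n^{IG} is attained (optimal). -/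
/-! For the linear maps `T₁ x = α₁ x`, `T₂ x = α₂ x` one (IG) step multiplies `xₙ` by exactly the
factor `(1 - (1 - α₁) aₙ) (α₁ + (α₂ - α₁) bₙ)`, so the iterates are the products of these factors
times `x₀`; the factors are nonnegative, so taking absolute values gives the claimed equality. -/

open Finset

theorem eq_prod_range_mul_of_succ_eq_mul {M : Type*} [CommMonoid M] {u c : ℕ → M}
    (h : ∀ n, u (n + 1) = c n * u n) (n : ℕ) : u n = (∏ k ∈ range n, c k) * u 0 := by
  induction n with
  | zero => simp
  | succ n ih => rw [h n, ih, prod_range_succ, mul_assoc, mul_left_comm]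

theorem ig_factor_nonneg {α₁ α₂ a b : ℝ} (hα₁ : α₁ ∈ Set.Icc (0 : ℝ) 1)
    (hα₂ : α₂ ∈ Set.Icc (0 : ℝ) 1) (ha : a ∈ Set.Icc (0 : ℝ) 1) (hb : b ∈ Set.Icc (0 : ℝ) 1) :
    0 ≤ (1 - (1 - α₁) * a) * (α₁ + (α₂ - α₁) * b) := by
  obtain ⟨hα₁0, hα₁1⟩ := hα₁
  obtain ⟨ha0, ha1⟩ := ha
  obtain ⟨hb0, hb1⟩ := hb
  apply mul_nonneg
  · nlinarith
  · nlinarith [hα₂.1]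

theorem IG_upper_bound_attained_general (α₁ α₂ : ℝ)
    (hα₁ : α₁ ∈ Set.Icc (0 : ℝ) 1) (hα₂ : α₂ ∈ Set.Icc (0 : ℝ) 1)
    (a b : ℕ → ℝ)
    (ha : ∀ n, a n ∈ Set.Icc (0 : ℝ) 1) (hb : ∀ n, b n ∈ Set.Icc (0 : ℝ) 1)
    (x y : ℕ → ℝ)
    (hy : ∀ n, y n = (1 - a n) * x n + a n * (α₁ * x n))
    (hx : ∀ n, x (n + 1) = (1 - b n) * (α₁ * y n) + b n * (α₂ * y n)) :
    ∀ n, ‖x (n + 1) - 0‖ =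
      (∏ k ∈ Finset.range (n + 1),
        (1 - (1 - α₁) * a k) * (α₁ + (α₂ - α₁) * b k)) * ‖x 0 - 0‖ := by
  have step : ∀ n, x (n + 1) = (1 - (1 - α₁) * a n) * (α₁ + (α₂ - α₁) * b n) * x n := by
    intro n
    rw [hx n, hy n]
    ring
  intro n
  have hprod : 0 ≤ ∏ k ∈ range (n + 1), (1 - (1 - α₁) * a k) * (α₁ + (α₂ - α₁) * b k) :=
    prod_nonneg fun k _ => ig_factor_nonneg hα₁ hα₂ (ha k) (hb k)
  rw [eq_prod_range_mul_of_succ_eq_mul step, sub_zero, sub_zero, norm_mul, Real.norm_eq_abs,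
    abs_of_nonneg hprod]

theorem IG_upper_bound_attained (α₁ α₂ : ℝ)
    (hα₁ : α₁ ∈ Set.Icc (0 : ℝ) 1) (hα₂ : α₂ ∈ Set.Icc (0 : ℝ) 1)
    (a b : ℕ → ℝ)
    (ha : ∀ n, a n ∈ Set.Icc (0 : ℝ) 1) (hb : ∀ n, b n ∈ Set.Icc (0 : ℝ) 1)
    (x y : ℕ → ℝ)
    (hx0 : x 0 ∈ Set.Ioo (0 : ℝ) (1 / 2))
    (hy : ∀ n, y n = (1 - a n) * x n + a n * (α₁ * x n))
    (hx : ∀ n, x (n + 1) = (1 - b n) * (α₁ * y n) + b n * (α₂ * y n)) :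
    ∀ n, ‖x (n + 1) - 0‖ =
      (∏ k ∈ Finset.range (n + 1),
        (1 - (1 - α₁) * a k) * (α₁ + (α₂ - α₁) * b k)) * ‖x 0 - 0‖ :=
  IG_upper_bound_attained_general α₁ α₂ hα₁ hα₂ a b ha hb x y hy hx
end

section
/- Let X be a real normed space, Ω ⊆ X convex, S₁ β₁-Lipschitz, S₂ β₂-Lipschitz, T₁ α₁-Lipschitz, T₂ α₂-Lipschitz self-maps of Ω with common fixed point x*, and (a_n),(b_n) ⊂ [0,1]. Define y_n = (1-a_n)S₁(x_n) + a_n T₁(x_n), x_{n+1} = (1-b_n)S₂(y_n) + b_n T₂(y_n). Then ‖x_{n+1} - x*‖ ≤ (∏_{k=0}^{n} [β₁ + (α₁-β₁)a_k][β₂ + (α₂-β₂)b_k]) ‖x₀ - x*‖ for all n. -/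
/-! Since `x*` is fixed by all four maps, `y_n - x* = (1 - a_n)(S₁ x_n - x*) + a_n (T₁ x_n - x*)`,
so the triangle inequality and the Lipschitz bounds at `x*` give
`‖y_n - x*‖ ≤ (β₁ + (α₁ - β₁) a_n) ‖x_n - x*‖`, and likewise for `x_{n+1}` in terms of `y_n`.
Chaining these one-step contractions with nonnegative factors yields the product bound. -/

open Finset

theorem norm_combo_sub_le {X : Type*} [NormedAddCommGroup X] [NormedSpace ℝ X]
    {u v p ξ : X} {α β t : ℝ} (hu : ‖u - p‖ ≤ β * ‖ξ - p‖) (hv : ‖v - p‖ ≤ α * ‖ξ - p‖)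
    (ht : t ∈ Set.Icc (0 : ℝ) 1) :
    ‖(1 - t) • u + t • v - p‖ ≤ (β + (α - β) * t) * ‖ξ - p‖ := by
  obtain ⟨ht₀, ht₁⟩ := ht
  calc ‖(1 - t) • u + t • v - p‖ = ‖(1 - t) • (u - p) + t • (v - p)‖ := by congr 1; module
    _ ≤ (1 - t) * ‖u - p‖ + t * ‖v - p‖ := by
        grw [norm_add_le, norm_smul_of_nonneg (sub_nonneg.2 ht₁), norm_smul_of_nonneg ht₀]
    _ ≤ (1 - t) * (β * ‖ξ - p‖) + t * (α * ‖ξ - p‖) := by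
        gcongr
    _ = (β + (α - β) * t) * ‖ξ - p‖ := by ring

theorem combo_coeff_nonneg {α β t : ℝ} (hα : 0 ≤ α) (hβ : 0 ≤ β) (ht : t ∈ Set.Icc (0 : ℝ) 1) :
    0 ≤ β + (α - β) * t := by
  obtain ⟨ht₀, ht₁⟩ := ht
  nlinarith

theorem le_prod_range_mul_of_le_mul {u c : ℕ → ℝ} (hc : ∀ n, 0 ≤ c n)
    (hu : ∀ n, u (n + 1) ≤ c n * u n) (n : ℕ) :
    u (n + 1) ≤ (∏ k ∈ range (n + 1), c k) * u 0 := by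
  induction n with
  | zero => simpa using hu 0
  | succ n ih =>
    calc u (n + 2) ≤ c (n + 1) * u (n + 1) := hu (n + 1)
      _ ≤ c (n + 1) * ((∏ k ∈ range (n + 1), c k) * u 0) := by gcongr; exact hc _
      _ = (∏ k ∈ range (n + 2), c k) * u 0 := by rw [prod_range_succ _ (n + 1)]; ring

theorem G_upper_bound_general {X : Type*} [NormedAddCommGroup X] [NormedSpace ℝ X]
    (Ω : Set X) (α₁ α₂ β₁ β₂ : ℝ)
    (hα₁ : α₁ ∈ Set.Icc (0 : ℝ) 1) (hα₂ : α₂ ∈ Set.Icc (0 : ℝ) 1)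
    (hβ₁ : β₁ ∈ Set.Icc (0 : ℝ) 1) (hβ₂ : β₂ ∈ Set.Icc (0 : ℝ) 1)
    (S₁ S₂ T₁ T₂ : X → X)
    (hS₁ : ∀ ξ ∈ Ω, ∀ η ∈ Ω, ‖S₁ ξ - S₁ η‖ ≤ β₁ * ‖ξ - η‖)
    (hS₂ : ∀ ξ ∈ Ω, ∀ η ∈ Ω, ‖S₂ ξ - S₂ η‖ ≤ β₂ * ‖ξ - η‖)
    (hT₁ : ∀ ξ ∈ Ω, ∀ η ∈ Ω, ‖T₁ ξ - T₁ η‖ ≤ α₁ * ‖ξ - η‖)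
    (hT₂ : ∀ ξ ∈ Ω, ∀ η ∈ Ω, ‖T₂ ξ - T₂ η‖ ≤ α₂ * ‖ξ - η‖)
    (xs : X) (hxs : xs ∈ Ω)
    (hfS₁ : S₁ xs = xs) (hfS₂ : S₂ xs = xs) (hfT₁ : T₁ xs = xs) (hfT₂ : T₂ xs = xs)
    (a b : ℕ → ℝ)
    (ha : ∀ n, a n ∈ Set.Icc (0 : ℝ) 1) (hb : ∀ n, b n ∈ Set.Icc (0 : ℝ) 1)
    (x y : ℕ → X) (hxΩ : ∀ n, x n ∈ Ω) (hyΩ : ∀ n, y n ∈ Ω)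
    (hy : ∀ n, y n = (1 - a n) • S₁ (x n) + a n • T₁ (x n))
    (hx : ∀ n, x (n + 1) = (1 - b n) • S₂ (y n) + b n • T₂ (y n)) :
    ∀ n, ‖x (n + 1) - xs‖ ≤
      (∏ k ∈ Finset.range (n + 1),
        (β₁ + (α₁ - β₁) * a k) * (β₂ + (α₂ - β₂) * b k)) * ‖x 0 - xs‖ := by
  have hy_le (n : ℕ) : ‖y n - xs‖ ≤ (β₁ + (α₁ - β₁) * a n) * ‖x n - xs‖ := by
    have hS := hS₁ _ (hxΩ n) _ hxs
    have hT := hT₁ _ (hxΩ n) _ hxs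
    rw [hfS₁] at hS; rw [hfT₁] at hT
    rw [hy n]; exact norm_combo_sub_le hS hT (ha n)
  have hx_le (n : ℕ) : ‖x (n + 1) - xs‖ ≤ (β₂ + (α₂ - β₂) * b n) * ‖y n - xs‖ := by
    have hS := hS₂ _ (hyΩ n) _ hxs
    have hT := hT₂ _ (hyΩ n) _ hxs
    rw [hfS₂] at hS; rw [hfT₂] at hT
    rw [hx n]; exact norm_combo_sub_le hS hT (hb n)
  have hc₁ (n : ℕ) := combo_coeff_nonneg hα₁.1 hβ₁.1 (ha n)
  have hc₂ (n : ℕ) := combo_coeff_nonneg hα₂.1 hβ₂.1 (hb n)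
  refine le_prod_range_mul_of_le_mul (u := fun n ↦ ‖x n - xs‖)
    (fun n ↦ mul_nonneg (hc₁ n) (hc₂ n)) fun n ↦ ?_
  calc ‖x (n + 1) - xs‖ ≤ (β₂ + (α₂ - β₂) * b n) * ((β₁ + (α₁ - β₁) * a n) * ‖x n - xs‖) :=
        (hx_le n).trans (by gcongr; exacts [hc₂ n, hy_le n])
    _ = _ := by ring

theorem G_upper_bound {X : Type*} [NormedAddCommGroup X] [NormedSpace ℝ X]
    (Ω : Set X) (hΩ : Convex ℝ Ω) (α₁ α₂ β₁ β₂ : ℝ)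
    (hα₁ : α₁ ∈ Set.Icc (0 : ℝ) 1) (hα₂ : α₂ ∈ Set.Icc (0 : ℝ) 1)
    (hβ₁ : β₁ ∈ Set.Icc (0 : ℝ) 1) (hβ₂ : β₂ ∈ Set.Icc (0 : ℝ) 1)
    (S₁ S₂ T₁ T₂ : X → X)
    (hS₁map : ∀ ξ ∈ Ω, S₁ ξ ∈ Ω) (hS₂map : ∀ ξ ∈ Ω, S₂ ξ ∈ Ω)
    (hT₁map : ∀ ξ ∈ Ω, T₁ ξ ∈ Ω) (hT₂map : ∀ ξ ∈ Ω, T₂ ξ ∈ Ω)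
    (hS₁ : ∀ ξ ∈ Ω, ∀ η ∈ Ω, ‖S₁ ξ - S₁ η‖ ≤ β₁ * ‖ξ - η‖)
    (hS₂ : ∀ ξ ∈ Ω, ∀ η ∈ Ω, ‖S₂ ξ - S₂ η‖ ≤ β₂ * ‖ξ - η‖)
    (hT₁ : ∀ ξ ∈ Ω, ∀ η ∈ Ω, ‖T₁ ξ - T₁ η‖ ≤ α₁ * ‖ξ - η‖)
    (hT₂ : ∀ ξ ∈ Ω, ∀ η ∈ Ω, ‖T₂ ξ - T₂ η‖ ≤ α₂ * ‖ξ - η‖)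
    (xs : X) (hxs : xs ∈ Ω)
    (hfS₁ : S₁ xs = xs) (hfS₂ : S₂ xs = xs) (hfT₁ : T₁ xs = xs) (hfT₂ : T₂ xs = xs)
    (a b : ℕ → ℝ)
    (ha : ∀ n, a n ∈ Set.Icc (0 : ℝ) 1) (hb : ∀ n, b n ∈ Set.Icc (0 : ℝ) 1)
    (x y : ℕ → X) (hxΩ : ∀ n, x n ∈ Ω) (hyΩ : ∀ n, y n ∈ Ω)
    (hy : ∀ n, y n = (1 - a n) • S₁ (x n) + a n • T₁ (x n))
    (hx : ∀ n, x (n + 1) = (1 - b n) • S₂ (y n) + b n • T₂ (y n)) :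
    ∀ n, ‖x (n + 1) - xs‖ ≤
      (∏ k ∈ Finset.range (n + 1),
        (β₁ + (α₁ - β₁) * a k) * (β₂ + (α₂ - β₂) * b k)) * ‖x 0 - xs‖ :=
  G_upper_bound_general Ω α₁ α₂ β₁ β₂ hα₁ hα₂ hβ₁ hβ₂ S₁ S₂ T₁ T₂ hS₁ hS₂ hT₁ hT₂ xs hxs hfS₁ hfS₂
    hfT₁ hfT₂ a b ha hb x y hxΩ hyΩ hy hx
end

section
/- Let X be a real normed space, Ω ⊆ X convex, S₁ ∈ N_{κ₁,β₁}(Ω), S₂ ∈ N_{κ₂,β₂}(Ω), T₁ α₁-Lipschitz, T₂ α₂-Lipschitz on Ω, all with common fixed point x*, and suppose a_n ≤ κ₁/(κ₁+α₁) and b_n ≤ κ₂/(κ₂+α₂) for all n. Then the (G) iterates satisfy ‖x_{n+1} - x*‖ ≥ (∏_{k=0}^{n} [κ₁ - (κ₁+α₁)a_k][κ₂ - (κ₂+α₂)b_k]) ‖x₀ - x*‖ for all n. -/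
/-!
Write `q(a, b) = (κ₁ - (κ₁ + α₁) a)(κ₂ - (κ₂ + α₂) b)`. For `ξ ∈ Ω` and `c ∈ [0, 1]`, the reverse
triangle inequality, the lower bound `κ‖ξ - x*‖ ≤ ‖S ξ - x*‖` and the Lipschitz bound
`‖T ξ - x*‖ ≤ α‖ξ - x*‖` give
`‖(1 - c) S ξ + c T ξ - x*‖ ≥ (1 - c)κ‖ξ - x*‖ - cα‖ξ - x*‖ = (κ - (κ + α)c)‖ξ - x*‖`.
The constraint `c ≤ κ / (κ + α)` makes this factor nonnegative, so the two half-steps of (G) compose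
to `‖x_{n+1} - x*‖ ≥ q(a_n, b_n)‖x_n - x*‖`, and iterating gives the product bound.
-/

open Finset

lemma mul_le_norm_smul_add_smul {X : Type*} [NormedAddCommGroup X] [NormedSpace ℝ X]
    {κ α c d : ℝ} (hc₀ : 0 ≤ c) (hc₁ : c ≤ 1) {u v : X}
    (hu : κ * d ≤ ‖u‖) (hv : ‖v‖ ≤ α * d) :
    (κ - (κ + α) * c) * d ≤ ‖(1 - c) • u + c • v‖ :=
  calc (κ - (κ + α) * c) * d = (1 - c) * (κ * d) - c * (α * d) := by ring
    _ ≤ (1 - c) * ‖u‖ - c * ‖v‖ := by gcongr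
    _ = ‖(1 - c) • u‖ - ‖c • v‖ := by
      rw [norm_smul, norm_smul, Real.norm_of_nonneg hc₀, Real.norm_of_nonneg (by linarith)]
    _ ≤ ‖(1 - c) • u + c • v‖ := norm_sub_le_norm_add _ _

lemma sub_add_mul_nonneg_of_le_div {κ α c : ℝ} (hκ : 0 ≤ κ) (hα : 0 ≤ α)
    (hc : c ≤ κ / (κ + α)) : 0 ≤ κ - (κ + α) * c := by
  rcases (add_nonneg hκ hα).eq_or_lt with h | h
  · rw [← h]; simpa using hκ
  · rw [le_div_iff₀ h] at hc; linarith

lemma mul_norm_sub_le_norm_averaged_sub {X : Type*} [NormedAddCommGroup X] [NormedSpace ℝ X]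
    {κ α c : ℝ} (hc₀ : 0 ≤ c) (hc₁ : c ≤ 1) {S T : X → X} {p ξ : X}
    (hSp : S p = p) (hTp : T p = p)
    (hS : κ * ‖ξ - p‖ ≤ ‖S ξ - S p‖) (hT : ‖T ξ - T p‖ ≤ α * ‖ξ - p‖) :
    (κ - (κ + α) * c) * ‖ξ - p‖ ≤ ‖(1 - c) • S ξ + c • T ξ - p‖ := by
  have hsplit : (1 - c) • S ξ + c • T ξ - p = (1 - c) • (S ξ - S p) + c • (T ξ - T p) := by
    rw [hSp, hTp]; module
  rw [hsplit]
  exact mul_le_norm_smul_add_smul hc₀ hc₁ hS hT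

lemma prod_range_mul_le_of_mul_le_succ {c r : ℕ → ℝ} (hc : ∀ n, 0 ≤ c n)
    (hr : ∀ n, c n * r n ≤ r (n + 1)) (n : ℕ) :
    (∏ k ∈ range n, c k) * r 0 ≤ r n := by
  induction n with
  | zero => simp
  | succ n ih =>
    calc (∏ k ∈ range (n + 1), c k) * r 0 = c n * ((∏ k ∈ range n, c k) * r 0) := by
          rw [prod_range_succ]; ring
      _ ≤ c n * r n := by gcongr; exact hc n
      _ ≤ r (n + 1) := hr n

theorem G_lower_bound_general {X : Type*} [NormedAddCommGroup X] [NormedSpace ℝ X]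
    (Ω : Set X) (κ₁ κ₂ α₁ α₂ : ℝ)
    (hκ₁ : 0 ≤ κ₁)
    (hκ₂ : 0 ≤ κ₂)
    (hα₁ : α₁ ∈ Set.Icc (0 : ℝ) 1) (hα₂ : α₂ ∈ Set.Icc (0 : ℝ) 1)
    (S₁ S₂ T₁ T₂ : X → X)
    (hS₁low : ∀ ξ ∈ Ω, ∀ η ∈ Ω, κ₁ * ‖ξ - η‖ ≤ ‖S₁ ξ - S₁ η‖)
    (hS₂low : ∀ ξ ∈ Ω, ∀ η ∈ Ω, κ₂ * ‖ξ - η‖ ≤ ‖S₂ ξ - S₂ η‖)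
    (hT₁ : ∀ ξ ∈ Ω, ∀ η ∈ Ω, ‖T₁ ξ - T₁ η‖ ≤ α₁ * ‖ξ - η‖)
    (hT₂ : ∀ ξ ∈ Ω, ∀ η ∈ Ω, ‖T₂ ξ - T₂ η‖ ≤ α₂ * ‖ξ - η‖)
    (xs : X) (hxs : xs ∈ Ω)
    (hfS₁ : S₁ xs = xs) (hfS₂ : S₂ xs = xs) (hfT₁ : T₁ xs = xs) (hfT₂ : T₂ xs = xs)
    (a b : ℕ → ℝ)
    (ha : ∀ n, a n ∈ Set.Icc (0 : ℝ) 1) (hb : ∀ n, b n ∈ Set.Icc (0 : ℝ) 1)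
    (ha' : ∀ n, a n ≤ κ₁ / (κ₁ + α₁)) (hb' : ∀ n, b n ≤ κ₂ / (κ₂ + α₂))
    (x y : ℕ → X) (hxΩ : ∀ n, x n ∈ Ω) (hyΩ : ∀ n, y n ∈ Ω)
    (hy : ∀ n, y n = (1 - a n) • S₁ (x n) + a n • T₁ (x n))
    (hx : ∀ n, x (n + 1) = (1 - b n) • S₂ (y n) + b n • T₂ (y n)) :
    ∀ n, (∏ k ∈ Finset.range (n + 1),
        (κ₁ - (κ₁ + α₁) * a k) * (κ₂ - (κ₂ + α₂) * b k)) * ‖x 0 - xs‖ ≤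
      ‖x (n + 1) - xs‖ := by
  have hy_dist (n : ℕ) : (κ₁ - (κ₁ + α₁) * a n) * ‖x n - xs‖ ≤ ‖y n - xs‖ := by
    rw [hy n]
    exact mul_norm_sub_le_norm_averaged_sub (ha n).1 (ha n).2 hfS₁ hfT₁
      (hS₁low _ (hxΩ n) _ hxs) (hT₁ _ (hxΩ n) _ hxs)
  have hx_dist (n : ℕ) : (κ₂ - (κ₂ + α₂) * b n) * ‖y n - xs‖ ≤ ‖x (n + 1) - xs‖ := by
    rw [hx n]
    exact mul_norm_sub_le_norm_averaged_sub (hb n).1 (hb n).2 hfS₂ hfT₂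
      (hS₂low _ (hyΩ n) _ hxs) (hT₂ _ (hyΩ n) _ hxs)
  have hc₂ (n : ℕ) : 0 ≤ κ₂ - (κ₂ + α₂) * b n := sub_add_mul_nonneg_of_le_div hκ₂ hα₂.1 (hb' n)
  refine fun n ↦ prod_range_mul_le_of_mul_le_succ (r := fun n ↦ ‖x n - xs‖)
    (fun k ↦ mul_nonneg (sub_add_mul_nonneg_of_le_div hκ₁ hα₁.1 (ha' k)) (hc₂ k))
    (fun k ↦ ?_) (n + 1)
  calc (κ₁ - (κ₁ + α₁) * a k) * (κ₂ - (κ₂ + α₂) * b k) * ‖x k - xs‖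
      = (κ₂ - (κ₂ + α₂) * b k) * ((κ₁ - (κ₁ + α₁) * a k) * ‖x k - xs‖) := by ring
    _ ≤ (κ₂ - (κ₂ + α₂) * b k) * ‖y k - xs‖ := by gcongr; exacts [hc₂ k, hy_dist k]
    _ ≤ ‖x (k + 1) - xs‖ := hx_dist k

theorem G_lower_bound {X : Type*} [NormedAddCommGroup X] [NormedSpace ℝ X]
    (Ω : Set X) (hΩ : Convex ℝ Ω) (κ₁ κ₂ α₁ α₂ β₁ β₂ : ℝ)
    (hκ₁ : 0 ≤ κ₁) (hκβ₁ : κ₁ ≤ β₁) (hβ₁ : β₁ ≤ 1)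
    (hκ₂ : 0 ≤ κ₂) (hκβ₂ : κ₂ ≤ β₂) (hβ₂ : β₂ ≤ 1)
    (hα₁ : α₁ ∈ Set.Icc (0 : ℝ) 1) (hα₂ : α₂ ∈ Set.Icc (0 : ℝ) 1)
    (S₁ S₂ T₁ T₂ : X → X)
    (hS₁map : ∀ ξ ∈ Ω, S₁ ξ ∈ Ω) (hS₂map : ∀ ξ ∈ Ω, S₂ ξ ∈ Ω)
    (hT₁map : ∀ ξ ∈ Ω, T₁ ξ ∈ Ω) (hT₂map : ∀ ξ ∈ Ω, T₂ ξ ∈ Ω)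
    (hS₁low : ∀ ξ ∈ Ω, ∀ η ∈ Ω, κ₁ * ‖ξ - η‖ ≤ ‖S₁ ξ - S₁ η‖)
    (hS₁up : ∀ ξ ∈ Ω, ∀ η ∈ Ω, ‖S₁ ξ - S₁ η‖ ≤ β₁ * ‖ξ - η‖)
    (hS₂low : ∀ ξ ∈ Ω, ∀ η ∈ Ω, κ₂ * ‖ξ - η‖ ≤ ‖S₂ ξ - S₂ η‖)
    (hS₂up : ∀ ξ ∈ Ω, ∀ η ∈ Ω, ‖S₂ ξ - S₂ η‖ ≤ β₂ * ‖ξ - η‖)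
    (hT₁ : ∀ ξ ∈ Ω, ∀ η ∈ Ω, ‖T₁ ξ - T₁ η‖ ≤ α₁ * ‖ξ - η‖)
    (hT₂ : ∀ ξ ∈ Ω, ∀ η ∈ Ω, ‖T₂ ξ - T₂ η‖ ≤ α₂ * ‖ξ - η‖)
    (xs : X) (hxs : xs ∈ Ω)
    (hfS₁ : S₁ xs = xs) (hfS₂ : S₂ xs = xs) (hfT₁ : T₁ xs = xs) (hfT₂ : T₂ xs = xs)
    (a b : ℕ → ℝ)
    (ha : ∀ n, a n ∈ Set.Icc (0 : ℝ) 1) (hb : ∀ n, b n ∈ Set.Icc (0 : ℝ) 1)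
    (ha' : ∀ n, a n ≤ κ₁ / (κ₁ + α₁)) (hb' : ∀ n, b n ≤ κ₂ / (κ₂ + α₂))
    (x y : ℕ → X) (hxΩ : ∀ n, x n ∈ Ω) (hyΩ : ∀ n, y n ∈ Ω)
    (hy : ∀ n, y n = (1 - a n) • S₁ (x n) + a n • T₁ (x n))
    (hx : ∀ n, x (n + 1) = (1 - b n) • S₂ (y n) + b n • T₂ (y n)) :
    ∀ n, (∏ k ∈ Finset.range (n + 1),
        (κ₁ - (κ₁ + α₁) * a k) * (κ₂ - (κ₂ + α₂) * b k)) * ‖x 0 - xs‖ ≤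
      ‖x (n + 1) - xs‖ :=
  G_lower_bound_general Ω κ₁ κ₂ α₁ α₂ hκ₁ hκ₂ hα₁ hα₂ S₁ S₂ T₁ T₂ hS₁low hS₂low hT₁ hT₂ xs hxs hfS₁
    hfS₂ hfT₁ hfT₂ a b ha hb ha' hb' x y hxΩ hyΩ hy hx
end

section
/- Let α₁ ∈ [0,1], α₂ ∈ [0,1], δ > 0, and sequences (a_k),(b_k) ⊂ [0,1] with 1 - b_k - α₂ b_k(1 - a_k + α₁ a_k) ≥ δ for all k. If ∑_k [(1-α₁)(a_k+1) + (α₁ - α₂ - (1+α₂)/δ)b_k] = +∞, then the ratio β_n = ∏_{k=0}^{n} ([α₁(1-b_k)+α₂b_k][1-(1-α₁)a_k]) / (1 - b_k - α₂b_k[1-(1-α₁)a_k]) tends to 0 as n → ∞. -/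
/-!
Writing the `k`-th factor as `P Q / D` with `P = α₁(1 - b) + α₂ b`, `Q = 1 - (1 - α₁) a` and
`D = 1 - b - α₂ b Q ≥ δ`, the bound `x ≤ exp (x - 1)` (i.e. `ln x ≤ x - 1`) applied to `P`, `Q` and
`1 / D` gives `P Q / D ≤ exp (-c)`, where `c = (1 - α₁)(a + 1) + (α₁ - α₂ - (1 + α₂)/δ) b`: the
`1 / D` term costs at most `(1 - D)/D ≤ (1 + α₂) b / δ`. Hence `β_n ≤ exp (-∑ c_k) → 0`.
-/

open Filter Real

lemma le_exp_sub_one (x : ℝ) : x ≤ exp (x - 1) := by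
  simpa using add_one_le_exp (x - 1)

lemma inv_le_exp_div {D δ β : ℝ} (hδ : 0 < δ) (hD : δ ≤ D) (hβ : 0 ≤ β) (h : 1 - D ≤ β) :
    D⁻¹ ≤ exp (β / δ) := by
  have hD0 : 0 < D := hδ.trans_le hD
  calc D⁻¹ ≤ exp (D⁻¹ - 1) := le_exp_sub_one _
    _ = exp ((1 - D) / D) := by field_simp
    _ ≤ exp (β / δ) := by
      gcongr exp ?_
      calc (1 - D) / D ≤ β / D := by gcongr
        _ ≤ β / δ := by gcongr

lemma mul_div_le_exp {P Q D δ β : ℝ} (hQ : 0 ≤ Q) (hδ : 0 < δ) (hD : δ ≤ D)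
    (hβ : 0 ≤ β) (h : 1 - D ≤ β) :
    P * Q / D ≤ exp ((P - 1) + (Q - 1) + β / δ) := by
  rw [div_eq_mul_inv, exp_add, exp_add]
  have hD0 : 0 < D := hδ.trans_le hD
  gcongr
  · exact le_exp_sub_one P
  · exact le_exp_sub_one Q
  · exact inv_le_exp_div hδ hD hβ h

lemma tendsto_prod_range_zero_of_le_exp_neg {r c : ℕ → ℝ} (hr : ∀ k, 0 ≤ r k)
    (hrc : ∀ k, r k ≤ exp (-c k)) (hc : Tendsto (fun n => ∑ k ∈ Finset.range n, c k) atTop atTop) :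
    Tendsto (fun n => ∏ k ∈ Finset.range n, r k) atTop (nhds 0) := by
  refine squeeze_zero (fun n => Finset.prod_nonneg fun k _ => hr k) (fun n => ?_)
    (tendsto_exp_atBot.comp (tendsto_neg_atTop_atBot.comp hc))
  calc ∏ k ∈ Finset.range n, r k ≤ ∏ k ∈ Finset.range n, exp (-c k) :=
        Finset.prod_le_prod (fun k _ => hr k) fun k _ => hrc k
    _ = exp (-∑ k ∈ Finset.range n, c k) := by rw [← exp_sum, Finset.sum_neg_distrib]

lemma factor_nonneg {α₁ α₂ a b : ℝ} (hα₁ : 0 ≤ α₁) (hα₂ : 0 ≤ α₂)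
    (ha : a ∈ Set.Icc (0 : ℝ) 1) (hb : b ∈ Set.Icc (0 : ℝ) 1)
    (hD : 0 ≤ 1 - b - α₂ * b * (1 - (1 - α₁) * a)) :
    0 ≤ (α₁ * (1 - b) + α₂ * b) * (1 - (1 - α₁) * a) / (1 - b - α₂ * b * (1 - (1 - α₁) * a)) := by
  obtain ⟨ha0, ha1⟩ := ha
  obtain ⟨hb0, hb1⟩ := hb
  have hQ : 0 ≤ 1 - (1 - α₁) * a := by nlinarith
  positivity

lemma factor_le_exp {α₁ α₂ δ a b : ℝ} (hα₁ : α₁ ∈ Set.Icc (0 : ℝ) 1) (hα₂ : 0 ≤ α₂)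
    (ha : a ∈ Set.Icc (0 : ℝ) 1) (hb : 0 ≤ b) (hδ : 0 < δ)
    (hD : δ ≤ 1 - b - α₂ * b * (1 - (1 - α₁) * a)) :
    (α₁ * (1 - b) + α₂ * b) * (1 - (1 - α₁) * a) / (1 - b - α₂ * b * (1 - (1 - α₁) * a)) ≤
      exp (-((1 - α₁) * (a + 1) + (α₁ - α₂ - (1 + α₂) / δ) * b)) := by
  obtain ⟨hα₁0, hα₁1⟩ := hα₁
  obtain ⟨ha0, ha1⟩ := ha
  have hQ0 : 0 ≤ 1 - (1 - α₁) * a := by nlinarith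
  have hQ1 : 1 - (1 - α₁) * a ≤ 1 := by nlinarith
  refine (mul_div_le_exp (β := (1 + α₂) * b) hQ0 hδ hD (by positivity)
    (by nlinarith [mul_le_mul_of_nonneg_left hQ1 (mul_nonneg hα₂ hb)])).trans_eq ?_
  congr 1
  ring

theorem IG_faster_than_I (α₁ α₂ δ : ℝ)
    (hα₁ : α₁ ∈ Set.Icc (0 : ℝ) 1) (hα₂ : α₂ ∈ Set.Icc (0 : ℝ) 1) (hδ : 0 < δ)
    (a b : ℕ → ℝ)
    (ha : ∀ k, a k ∈ Set.Icc (0 : ℝ) 1) (hb : ∀ k, b k ∈ Set.Icc (0 : ℝ) 1)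
    (hδ' : ∀ k, 1 - b k - α₂ * b k * (1 - a k + α₁ * a k) ≥ δ)
    (hdiv : Tendsto (fun n => ∑ k ∈ Finset.range n,
        ((1 - α₁) * (a k + 1) + (α₁ - α₂ - (1 + α₂) / δ) * b k)) atTop atTop) :
    Tendsto (fun n => ∏ k ∈ Finset.range (n + 1),
      ((α₁ * (1 - b k) + α₂ * b k) * (1 - (1 - α₁) * a k)) /
        (1 - b k - α₂ * b k * (1 - (1 - α₁) * a k))) atTop (nhds 0) := by
  have hD k : δ ≤ 1 - b k - α₂ * b k * (1 - (1 - α₁) * a k) := by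
    linarith [hδ' k, show 1 - a k + α₁ * a k = 1 - (1 - α₁) * a k by ring]
  exact (tendsto_prod_range_zero_of_le_exp_neg
    (fun k => factor_nonneg hα₁.1 hα₂.1 (ha k) (hb k) (hδ.le.trans (hD k)))
    (fun k => factor_le_exp hα₁ hα₂.1 (ha k) (hb k).1 hδ (hD k)) hdiv).comp
    (tendsto_add_atTop_nat 1)
end

section
/- Let α₁,α₂ ∈ [0,1], ε, τ > 0 and sequences (a_k),(b_k) ⊂ [0,1] with 1 - a_k - α₁a_k ≥ ε and 1 - b_k - α₂b_k ≥ τ for all k. If ∑_k [(1-α₁)a_k + ((α₁-α₂)/(ετ))b_k + 1 - α₁/(ετ)] = +∞, then γ_n = ∏_{k=0}^{n} ([α₁(1-b_k)+α₂b_k][1-(1-α₁)a_k]) / ([1-(1+α₂)b_k][1-(1+α₁)a_k]) tends to 0 as n → ∞. -/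
/-!
Each factor of `γ_n` is at most `exp (-c_k)`, where `c_k` is the `k`-th term of the divergent
series: the denominator is at least `ε τ`, and the elementary bounds `t ≤ exp (t - 1)` and
`1 - s ≤ exp (-s)` (the exponential form of `ln x - ln y ≤ (x - y) / y`) handle the two factors
of the numerator. Hence `0 ≤ γ_n ≤ exp (-∑_{k ≤ n} c_k) → 0`.
-/

open Filter Finset Real

theorem tendsto_prod_zero_of_le_exp_neg {f c : ℕ → ℝ} (hf : ∀ k, 0 ≤ f k)
    (hfc : ∀ k, f k ≤ exp (-c k))
    (hc : Tendsto (fun n => ∑ k ∈ range n, c k) atTop atTop) :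
    Tendsto (fun n => ∏ k ∈ range n, f k) atTop (nhds 0) := by
  refine squeeze_zero (fun n => prod_nonneg fun k _ => hf k) (fun n => ?_)
    (tendsto_exp_atBot.comp (tendsto_neg_atTop_atBot.comp hc))
  calc ∏ k ∈ range n, f k ≤ ∏ k ∈ range n, exp (-c k) :=
        prod_le_prod (fun k _ => hf k) (fun k _ => hfc k)
    _ = exp (-∑ k ∈ range n, c k) := by rw [← exp_sum, sum_neg_distrib]

theorem div_mul_one_sub_le_exp {x y m s : ℝ} (hx : 0 ≤ x) (hm : 0 < m) (hmy : m ≤ y)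
    (hs : s ≤ 1) : x / y * (1 - s) ≤ exp (x / m - 1 - s) := by
  have hxm : x / m ≤ exp (x / m - 1) := by linarith [add_one_le_exp (x / m - 1)]
  have hs' : 1 - s ≤ exp (-s) := by linarith [add_one_le_exp (-s)]
  calc x / y * (1 - s) ≤ x / m * (1 - s) := by gcongr
    _ ≤ exp (x / m - 1) * exp (-s) := by gcongr
    _ = exp (x / m - 1 - s) := by rw [← exp_add]; ring_nf

/-- The `k`-th factor of `γ_n = U_n^{IG} / L_n^{IM}`, with `a = a_k`, `b = b_k`. -/
noncomputable def errorRatioFactor (α₁ α₂ a b : ℝ) : ℝ :=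
  ((α₁ * (1 - b) + α₂ * b) * (1 - (1 - α₁) * a)) /
    ((1 - (1 + α₂) * b) * (1 - (1 + α₁) * a))

section ErrorRatioFactor

variable {α₁ α₂ ε τ a b : ℝ}

theorem mul_one_sub_add_mul_nonneg (hα₁ : 0 ≤ α₁) (hα₂ : 0 ≤ α₂) (hb : b ∈ Set.Icc (0 : ℝ) 1) :
    0 ≤ α₁ * (1 - b) + α₂ * b := by
  have : 0 ≤ 1 - b := by linarith [hb.2]
  have := hb.1
  positivity

theorem mul_le_errorRatioFactor_denom (hε : 0 < ε) (hτ : 0 < τ)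
    (hεa : 1 - a - α₁ * a ≥ ε) (hτb : 1 - b - α₂ * b ≥ τ) :
    ε * τ ≤ (1 - (1 + α₂) * b) * (1 - (1 + α₁) * a) := by
  rw [mul_comm ε]
  exact mul_le_mul (by linarith) (by linarith) hε.le (by linarith)

theorem errorRatioFactor_nonneg (hα₁ : 0 ≤ α₁) (hα₂ : 0 ≤ α₂) (hε : 0 < ε) (hτ : 0 < τ)
    (ha : 0 ≤ a) (hb : b ∈ Set.Icc (0 : ℝ) 1)
    (hεa : 1 - a - α₁ * a ≥ ε) (hτb : 1 - b - α₂ * b ≥ τ) :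
    0 ≤ errorRatioFactor α₁ α₂ a b := by
  have hden := mul_le_errorRatioFactor_denom hε hτ hεa hτb
  have hnum := mul_one_sub_add_mul_nonneg hα₁ hα₂ hb
  have hu : 0 ≤ 1 - (1 - α₁) * a := by nlinarith
  have : 0 < ε * τ := by positivity
  exact div_nonneg (mul_nonneg hnum hu) (by linarith)

theorem errorRatioFactor_le_exp (hα₁ : 0 ≤ α₁) (hα₂ : 0 ≤ α₂) (hε : 0 < ε) (hτ : 0 < τ)
    (ha : 0 ≤ a) (hb : b ∈ Set.Icc (0 : ℝ) 1)
    (hεa : 1 - a - α₁ * a ≥ ε) (hτb : 1 - b - α₂ * b ≥ τ) :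
    errorRatioFactor α₁ α₂ a b ≤
      exp (-((1 - α₁) * a + (α₁ - α₂) / (ε * τ) * b + 1 - α₁ / (ε * τ))) := by
  have hετ : 0 < ε * τ := by positivity
  have hs : (1 - α₁) * a ≤ 1 := by nlinarith
  calc errorRatioFactor α₁ α₂ a b
      = (α₁ * (1 - b) + α₂ * b) / ((1 - (1 + α₂) * b) * (1 - (1 + α₁) * a)) *
          (1 - (1 - α₁) * a) := mul_div_right_comm _ _ _
    _ ≤ exp ((α₁ * (1 - b) + α₂ * b) / (ε * τ) - 1 - (1 - α₁) * a) :=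
        div_mul_one_sub_le_exp (mul_one_sub_add_mul_nonneg hα₁ hα₂ hb) hετ
          (mul_le_errorRatioFactor_denom hε hτ hεa hτb) hs
    _ = exp (-((1 - α₁) * a + (α₁ - α₂) / (ε * τ) * b + 1 - α₁ / (ε * τ))) := by
        congr 1
        field_simp
        ring

end ErrorRatioFactor

theorem IG_faster_than_IM (α₁ α₂ ε τ : ℝ)
    (hα₁ : α₁ ∈ Set.Icc (0 : ℝ) 1) (hα₂ : α₂ ∈ Set.Icc (0 : ℝ) 1)
    (hε : 0 < ε) (hτ : 0 < τ)
    (a b : ℕ → ℝ)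
    (ha : ∀ k, a k ∈ Set.Icc (0 : ℝ) 1) (hb : ∀ k, b k ∈ Set.Icc (0 : ℝ) 1)
    (hε' : ∀ k, 1 - a k - α₁ * a k ≥ ε) (hτ' : ∀ k, 1 - b k - α₂ * b k ≥ τ)
    (hdiv : Tendsto (fun n => ∑ k ∈ Finset.range n,
        ((1 - α₁) * a k + (α₁ - α₂) / (ε * τ) * b k + 1 - α₁ / (ε * τ)))
      atTop atTop) :
    Tendsto (fun n => ∏ k ∈ Finset.range (n + 1),
      ((α₁ * (1 - b k) + α₂ * b k) * (1 - (1 - α₁) * a k)) /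
        ((1 - (1 + α₂) * b k) * (1 - (1 + α₁) * a k))) atTop (nhds 0) :=
  (tendsto_prod_zero_of_le_exp_neg (f := fun k => errorRatioFactor α₁ α₂ (a k) (b k))
    (fun k => errorRatioFactor_nonneg hα₁.1 hα₂.1 hε hτ (ha k).1 (hb k) (hε' k) (hτ' k))
    (fun k => errorRatioFactor_le_exp hα₁.1 hα₂.1 hε hτ (ha k).1 (hb k) (hε' k) (hτ' k))
    hdiv).comp (tendsto_add_atTop_nat 1)
end

section
/- Let α₁,κ₁,α₂,β₁,β₂ ∈ (0,1] with β₂ ≤ κ₁ ≤ α₁, and (a_n),(b_n) ⊂ [0,1] with a_n ≤ (1-β₁)/(1-β₁+2α₁) and b_n ≤ (κ₁-β₂)/(κ₁-β₂+2α₂). Define P_n = ∏_{k=0}^{n} ([β₁+(α₁-β₁)a_k][β₂+(α₂-β₂)b_k]) / ([1-(1+α₁)a_k][κ₁-(κ₁+α₂)b_k]). If ∑_n ((1-β₁)/(1-β₁+2α₁) - a_n) + ∑_n ((κ₁-β₂)/(κ₁-β₂+2α₂) - b_n) = +∞, then P_n → 0 as n → ∞. -/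
/-!
Write `c = κ - β + 2α` and `A = (κ - β) / c`. On `0 ≤ x ≤ A` the factor
`(β + (α - β) x) / (κ - (κ + α) x)` is at most `1 - c (A - x) ≤ exp (-c (A - x))`: after clearing
the (positive) denominator, the difference is a concave quadratic in `x` that is nonnegative at
`x = 0` (because `κ ≤ 1`) and vanishes at `x = A`. Multiplying the bounds for the two factors,
`P_n ≤ exp (-min c₁ c₂ · ∑ₖ ((A₁ - a_k) + (A₂ - b_k))) → 0`.
-/

open Filter Topology Real Finset

section IterationFactor

variable {α β κ x : ℝ}

lemma iterationFactor_denom_pos (hβ : 0 < β) (hβκ : β ≤ κ) (hα : 0 < α)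
    (hxA : x ≤ (κ - β) / (κ - β + 2 * α)) : 0 < κ - (κ + α) * x := by
  have hc : 0 < κ - β + 2 * α := by linarith
  rw [le_div_iff₀ hc] at hxA
  nlinarith [mul_le_mul_of_nonneg_left hxA (by linarith : 0 ≤ κ + α)]

lemma iterationFactor_num_pos (hβ : 0 < β) (hβκ : β ≤ κ) (hα : 0 < α) (hx : 0 ≤ x)
    (hxA : x ≤ (κ - β) / (κ - β + 2 * α)) : 0 < β + (α - β) * x := by
  have hc : 0 < κ - β + 2 * α := by linarith
  rw [le_div_iff₀ hc] at hxA
  rcases le_total β α with hβα | hαβ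
  · nlinarith [mul_nonneg (sub_nonneg.2 hβα) hx]
  · nlinarith [mul_le_mul_of_nonneg_left hxA (sub_nonneg.2 hαβ)]

lemma iterationFactor_nonneg (hβ : 0 < β) (hβκ : β ≤ κ) (hα : 0 < α) (hx : 0 ≤ x)
    (hxA : x ≤ (κ - β) / (κ - β + 2 * α)) : 0 ≤ (β + (α - β) * x) / (κ - (κ + α) * x) :=
  div_nonneg (iterationFactor_num_pos hβ hβκ hα hx hxA).le
    (iterationFactor_denom_pos hβ hβκ hα hxA).le

lemma iterationFactor_le_one_sub (hβ : 0 < β) (hβκ : β ≤ κ) (hκ : κ ≤ 1) (hα : 0 < α)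
    (hx : 0 ≤ x) (hxA : x ≤ (κ - β) / (κ - β + 2 * α)) :
    (β + (α - β) * x) / (κ - (κ + α) * x)
      ≤ 1 - (κ - β + 2 * α) * ((κ - β) / (κ - β + 2 * α) - x) := by
  have hc : 0 < κ - β + 2 * α := by linarith
  rw [mul_sub, mul_div_cancel₀ _ hc.ne', div_le_iff₀ (iterationFactor_denom_pos hβ hβκ hα hxA)]
  rw [le_div_iff₀ hc] at hxA
  nlinarith [mul_nonneg hx (sub_nonneg.2 hxA), mul_nonneg (sub_nonneg.2 hκ) (sub_nonneg.2 hβκ),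
    mul_nonneg (mul_nonneg hx (sub_nonneg.2 hxA)) (by linarith : 0 ≤ κ + α)]

lemma iterationFactor_le_exp (hβ : 0 < β) (hβκ : β ≤ κ) (hκ : κ ≤ 1) (hα : 0 < α)
    (hx : 0 ≤ x) (hxA : x ≤ (κ - β) / (κ - β + 2 * α)) :
    (β + (α - β) * x) / (κ - (κ + α) * x)
      ≤ exp (-((κ - β + 2 * α) * ((κ - β) / (κ - β + 2 * α) - x))) :=
  (iterationFactor_le_one_sub hβ hβκ hκ hα hx hxA).trans <| by
    linarith [add_one_le_exp (-((κ - β + 2 * α) * ((κ - β) / (κ - β + 2 * α) - x)))]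

end IterationFactor

lemma tendsto_prod_range_zero_of_le_exp_neg_s18 {f u : ℕ → ℝ} (hf : ∀ k, 0 ≤ f k)
    (hfu : ∀ k, f k ≤ exp (-u k)) (hu : Tendsto (fun n => ∑ k ∈ range n, u k) atTop atTop) :
    Tendsto (fun n => ∏ k ∈ range n, f k) atTop (𝓝 0) := by
  refine squeeze_zero (fun n => prod_nonneg fun k _ => hf k) (fun n => ?_)
    (tendsto_exp_atBot.comp (tendsto_neg_atTop_atBot.comp hu))
  calc ∏ k ∈ range n, f k ≤ ∏ k ∈ range n, exp (-u k) :=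
        prod_le_prod (fun k _ => hf k) fun k _ => hfu k
    _ = exp (-∑ k ∈ range n, u k) := by rw [← exp_sum, sum_neg_distrib]

theorem G_faster_than_IG_general (α₁ κ₁ α₂ β₁ β₂ : ℝ)
    (hα₁ : α₁ ∈ Set.Ioc (0 : ℝ) 1) (hκ₁ : κ₁ ∈ Set.Ioc (0 : ℝ) 1)
    (hα₂ : α₂ ∈ Set.Ioc (0 : ℝ) 1) (hβ₁ : β₁ ∈ Set.Ioc (0 : ℝ) 1)
    (hβ₂ : β₂ ∈ Set.Ioc (0 : ℝ) 1)
    (hβκ : β₂ ≤ κ₁)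
    (a b : ℕ → ℝ)
    (ha : ∀ n, a n ∈ Set.Icc (0 : ℝ) 1) (hb : ∀ n, b n ∈ Set.Icc (0 : ℝ) 1)
    (ha' : ∀ n, a n ≤ (1 - β₁) / (1 - β₁ + 2 * α₁))
    (hb' : ∀ n, b n ≤ (κ₁ - β₂) / (κ₁ - β₂ + 2 * α₂))
    (hdiv : Tendsto (fun n => ∑ k ∈ Finset.range n,
        (((1 - β₁) / (1 - β₁ + 2 * α₁) - a k)
          + ((κ₁ - β₂) / (κ₁ - β₂ + 2 * α₂) - b k))) atTop atTop) :
    Tendsto (fun n => ∏ k ∈ Finset.range (n + 1),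
      ((β₁ + (α₁ - β₁) * a k) * (β₂ + (α₂ - β₂) * b k)) /
        ((1 - (1 + α₁) * a k) * (κ₁ - (κ₁ + α₂) * b k))) atTop (nhds 0) := by
  set c₁ := 1 - β₁ + 2 * α₁
  set c₂ := κ₁ - β₂ + 2 * α₂
  set c := min c₁ c₂
  have hc : 0 < c := lt_min (by linarith [hα₁.1, hβ₁.2]) (by linarith [hα₂.1])
  have hgap₁ (k : ℕ) : 0 ≤ (1 - β₁) / c₁ - a k := sub_nonneg.2 (ha' k)
  have hgap₂ (k : ℕ) : 0 ≤ (κ₁ - β₂) / c₂ - b k := sub_nonneg.2 (hb' k)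
  have hn₁ (k : ℕ) := iterationFactor_nonneg hβ₁.1 hβ₁.2 hα₁.1 (ha k).1 (ha' k)
  have hn₂ (k : ℕ) := iterationFactor_nonneg hβ₂.1 hβκ hα₂.1 (hb k).1 (hb' k)
  have hf₁ (k : ℕ) := iterationFactor_le_exp hβ₁.1 hβ₁.2 le_rfl hα₁.1 (ha k).1 (ha' k)
  have hf₂ (k : ℕ) := iterationFactor_le_exp hβ₂.1 hβκ hκ₁.2 hα₂.1 (hb k).1 (hb' k)
  refine (tendsto_prod_range_zero_of_le_exp_neg_s18
    (u := fun k => c * (((1 - β₁) / c₁ - a k) + ((κ₁ - β₂) / c₂ - b k)))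
    (fun k => ?_) (fun k => ?_) ?_).comp (tendsto_add_atTop_nat 1)
  · rw [← div_mul_div_comm]
    exact mul_nonneg (hn₁ k) (hn₂ k)
  · calc _ = _ * _ := (div_mul_div_comm _ _ _ _).symm
      _ ≤ exp (-(c₁ * ((1 - β₁) / c₁ - a k))) * exp (-(c₂ * ((κ₁ - β₂) / c₂ - b k))) :=
        mul_le_mul (hf₁ k) (hf₂ k) (hn₂ k) (exp_nonneg _)
      _ ≤ _ := by
        rw [← exp_add]
        gcongr
        linarith [mul_le_mul_of_nonneg_right (min_le_left c₁ c₂) (hgap₁ k),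
          mul_le_mul_of_nonneg_right (min_le_right c₁ c₂) (hgap₂ k)]
  · simpa only [← mul_sum] using hdiv.const_mul_atTop hc

theorem G_faster_than_IG (α₁ κ₁ α₂ β₁ β₂ : ℝ)
    (hα₁ : α₁ ∈ Set.Ioc (0 : ℝ) 1) (hκ₁ : κ₁ ∈ Set.Ioc (0 : ℝ) 1)
    (hα₂ : α₂ ∈ Set.Ioc (0 : ℝ) 1) (hβ₁ : β₁ ∈ Set.Ioc (0 : ℝ) 1)
    (hβ₂ : β₂ ∈ Set.Ioc (0 : ℝ) 1)
    (hβκ : β₂ ≤ κ₁) (hκα : κ₁ ≤ α₁)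
    (a b : ℕ → ℝ)
    (ha : ∀ n, a n ∈ Set.Icc (0 : ℝ) 1) (hb : ∀ n, b n ∈ Set.Icc (0 : ℝ) 1)
    (ha' : ∀ n, a n ≤ (1 - β₁) / (1 - β₁ + 2 * α₁))
    (hb' : ∀ n, b n ≤ (κ₁ - β₂) / (κ₁ - β₂ + 2 * α₂))
    (hdiv : Tendsto (fun n => ∑ k ∈ Finset.range n,
        (((1 - β₁) / (1 - β₁ + 2 * α₁) - a k)
          + ((κ₁ - β₂) / (κ₁ - β₂ + 2 * α₂) - b k))) atTop atTop) :
    Tendsto (fun n => ∏ k ∈ Finset.range (n + 1),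
      ((β₁ + (α₁ - β₁) * a k) * (β₂ + (α₂ - β₂) * b k)) /
        ((1 - (1 + α₁) * a k) * (κ₁ - (κ₁ + α₂) * b k))) atTop (nhds 0) :=
  G_faster_than_IG_general α₁ κ₁ α₂ β₁ β₂ hα₁ hκ₁ hα₂ hβ₁ hβ₂ hβκ a b ha hb ha' hb' hdiv
end
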